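/- Let w ∈ ℝ^n with |w₁| ≥ ... ≥ |w_n| have μ-critical index h, let T = [n]\[h], and let I ⊆ T satisfy ‖w_I‖₂ ≤ sqrt(p/μ)·‖w_T‖₂ where p < μ/2. Then for every fixed assignment z_{[h]} ∈ {-1,1}^h to the first h variables and every t > 0, the probability over uniform z_{T} ∈ {-1,1}^{T} that ⟨w_{[n]\I}, z_{[n]\I}⟩ ∈ θ ± t·sqrt(p/μ)·‖w_T‖₂ is at most O(t·sqrt(p/μ) + μ). -/

import Mathlib

open Finset
open scoped Classical

noncomputable section

/-- `pm b` maps a Boolean to the corresponding element of `{-1,1} ⊆ ℝ`. -/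
def pm (b : Bool) : ℝ := if b then 1 else -1

/-- The probability that a sample from the distribution `p` satisfies `P`. -/
noncomputable def pr {α : Type*} [Fintype α] (p : PMF α) (P : α → Prop) : ℝ :=
  ∑ x, if P x then (p x).toReal else 0

/-- The uniform distribution over `{-1,1}^n`. -/
noncomputable def unif (n : ℕ) : PMF (Fin n → Bool) := PMF.uniformOfFintype _

/-!
Conditioning on the first `h` coordinates turns the event into `|X - m| ≤ s` for the Rademacher
sum `X = ∑_{i ∈ T \ I} w_i z_i`, a shift `m`, and `s = (t √(p/μ) + μ) ‖w_T‖₂`. Since `p/μ ≤ 1/2`,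
removing `I` keeps at least a quarter of the squared mass of the tail, and every weight of `X` is
at most `μ ‖w_T‖₂ ≤ s`, so it suffices to show `Pr[|X - m| ≤ s] = O(s / ‖w_{T \ I}‖₂)`.

This anti-concentration bound is Esseen's smoothing argument. The Fejér kernel
`∫_{-1}^{1} (1 - |ξ|) cos (ξ x) dξ = 2 (1 - cos x) / x²` is nonnegative and at least its value at
`1` on `[-1, 1]`, so the probability is bounded by the integral of the characteristic function of
`(X - m)/s` against the triangle function on `[-1, 1]`. That characteristic function is a product
of cosines of arguments of size at most `1`, hence bounded by a Gaussian, whose integral is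
`O(s / ‖w_{T \ I}‖₂)`.
-/

open Real

def fejerKernel (x : ℝ) : ℝ := ∫ ξ in (-1 : ℝ)..1, (1 - |ξ|) * cos (ξ * x)

lemma continuous_fejerIntegrand (x : ℝ) : Continuous fun ξ : ℝ => (1 - |ξ|) * cos (ξ * x) := by
  fun_prop

lemma integral_zero_one_fejerIntegrand {x : ℝ} (hx : x ≠ 0) :
    ∫ ξ in (0 : ℝ)..1, (1 - |ξ|) * cos (ξ * x) = (1 - cos x) / x ^ 2 := by
  have hderiv : ∀ ξ ∈ Set.uIcc (0 : ℝ) 1, HasDerivAt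
      (fun ξ => (1 - ξ) * sin (ξ * x) / x - cos (ξ * x) / x ^ 2)
      ((1 - |ξ|) * cos (ξ * x)) ξ := by
    intro ξ hξ
    rw [Set.uIcc_of_le zero_le_one] at hξ
    rw [abs_of_nonneg hξ.1]
    have hlin : HasDerivAt (fun ξ : ℝ => ξ * x) x ξ := by
      simpa using (hasDerivAt_id ξ).mul_const x
    have hF : HasDerivAt (fun ξ => (1 - ξ) * sin (ξ * x) / x - cos (ξ * x) / x ^ 2)
        ((-1 * sin (ξ * x) + (1 - ξ) * (cos (ξ * x) * x)) / x - -sin (ξ * x) * x / x ^ 2) ξ :=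
      ((((hasDerivAt_id' ξ).const_sub 1).mul hlin.sin).div_const x).sub
        (hlin.cos.div_const (x ^ 2))
    refine hF.congr_deriv ?_
    field_simp
    ring
  rw [intervalIntegral.integral_eq_sub_of_hasDerivAt hderiv
    ((continuous_fejerIntegrand x).intervalIntegrable _ _)]
  field_simp
  simp only [sub_self, zero_mul, zero_sub, sub_zero, mul_one, mul_zero, sin_zero, cos_zero,
    sub_neg_eq_add]
  ring

lemma fejerKernel_eq {x : ℝ} (hx : x ≠ 0) : fejerKernel x = 2 * (1 - cos x) / x ^ 2 := by
  have hsymm := intervalIntegral.integral_comp_neg (a := 0) (b := 1)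
    fun ξ : ℝ => (1 - |ξ|) * cos (ξ * x)
  simp only [abs_neg, neg_mul, cos_neg, neg_zero] at hsymm
  have hint (a b : ℝ) :
      IntervalIntegrable (fun ξ => (1 - |ξ|) * cos (ξ * x)) MeasureTheory.volume a b :=
    (continuous_fejerIntegrand x).intervalIntegrable a b
  rw [fejerKernel, ← intervalIntegral.integral_add_adjacent_intervals (hint (-1) 0) (hint 0 1),
    ← hsymm, integral_zero_one_fejerIntegrand hx]
  ring

lemma fejerKernel_nonneg (x : ℝ) : 0 ≤ fejerKernel x := by
  rcases eq_or_ne x 0 with rfl | hx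
  · refine intervalIntegral.integral_nonneg (by norm_num) fun ξ hξ => ?_
    simp [abs_le.2 hξ]
  · rw [fejerKernel_eq hx]
    have := cos_le_one x
    positivity

lemma fejerKernel_one_pos : 0 < fejerKernel 1 := by
  rw [fejerKernel_eq one_ne_zero]
  have : cos 1 < 1 := cos_one_le.trans_lt (by norm_num)
  norm_num
  linarith

lemma fejerKernel_one_le {x : ℝ} (hx : |x| ≤ 1) : fejerKernel 1 ≤ fejerKernel x := by
  refine intervalIntegral.integral_mono_on (by norm_num)
    ((continuous_fejerIntegrand 1).intervalIntegrable _ _)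
    ((continuous_fejerIntegrand x).intervalIntegrable _ _) fun ξ hξ => ?_
  have hξ1 : |ξ| ≤ 1 := abs_le.2 hξ
  refine mul_le_mul_of_nonneg_left ?_ (by linarith)
  have hle : |ξ * x| ≤ |ξ * 1| := by
    rw [abs_mul, abs_mul]
    exact mul_le_mul_of_nonneg_left (by simpa using hx) (abs_nonneg ξ)
  rw [← cos_abs (ξ * 1), ← cos_abs (ξ * x)]
  exact cos_le_cos_of_nonneg_of_le_pi (abs_nonneg _)
    (by simpa using hξ1.trans (by linarith [pi_gt_three])) hle

-- `Real.cos_bound` gives `cos x ≤ 1 - x ^ 2 / 2 + (5 / 96) |x| ^ 4`, and `|x| ^ 4 ≤ x ^ 2`.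
lemma abs_cos_le_exp_neg_sq {x : ℝ} (hx : |x| ≤ 1) : |cos x| ≤ exp (-(43 / 96) * x ^ 2) := by
  have hb := abs_le.1 (cos_bound hx)
  have hx2 : x ^ 2 ≤ 1 := by nlinarith [sq_abs x, abs_nonneg x]
  have hx4 : |x| ^ 4 ≤ x ^ 2 := by nlinarith [sq_abs x, abs_nonneg x]
  rw [abs_of_nonneg (by nlinarith)]
  calc cos x ≤ -(43 / 96) * x ^ 2 + 1 := by nlinarith
    _ ≤ exp (-(43 / 96) * x ^ 2) := add_one_le_exp _

section RademacherSum

variable {ι : Type*} [Fintype ι] [DecidableEq ι]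

lemma sum_exp_rademacherSum (R : Finset ι) (v : ι → ℝ) :
    ∑ z : ι → Bool, Complex.exp ((∑ i ∈ R, v i * pm (z i) : ℝ) * Complex.I)
      = 2 ^ Fintype.card ι * ∏ i ∈ R, (cos (v i) : ℂ) := by
  set F : ι → Bool → ℂ := fun i b =>
    if i ∈ R then Complex.exp ((v i * pm b : ℝ) * Complex.I) else 1
  have hprod (z : ι → Bool) : Complex.exp ((∑ i ∈ R, v i * pm (z i) : ℝ) * Complex.I)
      = ∏ i, F i (z i) := by
    rw [Finset.prod_ite_mem, Finset.univ_inter, ← Complex.exp_sum]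
    push_cast
    rw [Finset.sum_mul]
  have hfactor (i : ι) : ∑ b, F i b = 2 * if i ∈ R then (cos (v i) : ℂ) else 1 := by
    by_cases hi : i ∈ R
    · simp only [F, hi, if_true, Fintype.sum_bool, pm, Complex.ofReal_cos, Complex.two_cos]
      push_cast
      ring_nf
    · simp [F, hi, one_add_one_eq_two]
  simp only [hprod, ← Fintype.prod_sum, hfactor, Finset.prod_mul_distrib, Finset.prod_const,
    Finset.card_univ, Fintype.prod_ite_mem]

lemma sum_cos_rademacherSum_sub_le (R : Finset ι) (v : ι → ℝ) (a : ℝ)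
    (hv : ∀ i ∈ R, |v i| ≤ 1) :
    ∑ z : ι → Bool, cos (∑ i ∈ R, v i * pm (z i) - a)
      ≤ 2 ^ Fintype.card ι * exp (-(43 / 96) * ∑ i ∈ R, v i ^ 2) := by
  have hre (z : ι → Bool) : cos (∑ i ∈ R, v i * pm (z i) - a)
      = (Complex.exp ((∑ i ∈ R, v i * pm (z i) : ℝ) * Complex.I)
          * Complex.exp ((-a : ℝ) * Complex.I)).re := by
    rw [← Complex.exp_add, ← add_mul, ← Complex.ofReal_add, Complex.exp_ofReal_mul_I_re,
      sub_eq_add_neg]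
  simp only [hre, ← Complex.re_sum, ← Finset.sum_mul, sum_exp_rademacherSum]
  calc _ ≤ ‖((2 : ℂ) ^ Fintype.card ι * ∏ i ∈ R, (cos (v i) : ℂ))
          * Complex.exp ((-a : ℝ) * Complex.I)‖ := Complex.re_le_norm _
    _ = 2 ^ Fintype.card ι * ∏ i ∈ R, |cos (v i)| := by
      rw [norm_mul, Complex.norm_exp_ofReal_mul_I, mul_one, norm_mul, norm_prod, norm_pow]
      simp only [Complex.norm_real, Real.norm_eq_abs, Complex.norm_two]
    _ ≤ 2 ^ Fintype.card ι * ∏ i ∈ R, exp (-(43 / 96) * v i ^ 2) := by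
      gcongr with i hi
      exact abs_cos_le_exp_neg_sq (hv i hi)
    _ = 2 ^ Fintype.card ι * exp (-(43 / 96) * ∑ i ∈ R, v i ^ 2) := by
      rw [← exp_sum, Finset.mul_sum]

end RademacherSum

lemma integral_exp_neg_mul_sq_le {b : ℝ} (hb : 0 < b) :
    ∫ ξ in (-1 : ℝ)..1, exp (-b * ξ ^ 2) ≤ √(π / b) := by
  rw [intervalIntegral.integral_of_le (by norm_num), ← integral_gaussian b]
  exact MeasureTheory.setIntegral_le_integral (integrable_exp_neg_mul_sq hb)
    (.of_forall fun _ => (exp_pos _).le)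

lemma pr_mono {α : Type*} [Fintype α] (p : PMF α) {P Q : α → Prop} (hPQ : ∀ x, P x → Q x) :
    pr p P ≤ pr p Q := by
  refine Finset.sum_le_sum fun x _ => ?_
  by_cases hx : P x
  · simp [hx, hPQ x hx]
  · simp only [hx, if_false]
    split_ifs <;> simp

theorem pr_abs_sub_le_le_of_sum_mul_cos_le {α : Type*} [Fintype α] (p : PMF α) (X : α → ℝ)
    (m : ℝ) {s b : ℝ} (hs : 0 < s) (hb : 0 < b)
    (hchar : ∀ u ∈ Set.Icc (-1 : ℝ) 1,
      ∑ x, (p x).toReal * cos (u * ((X x - m) / s)) ≤ exp (-b * u ^ 2)) :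
    pr p (fun x => |X x - m| ≤ s) ≤ √(π / b) / fejerKernel 1 := by
  rw [le_div_iff₀ fejerKernel_one_pos]
  calc pr p (fun x => |X x - m| ≤ s) * fejerKernel 1
      ≤ ∑ x, (p x).toReal * fejerKernel ((X x - m) / s) := by
        rw [pr, Finset.sum_mul]
        refine Finset.sum_le_sum fun x _ => ?_
        split_ifs with hx
        · refine mul_le_mul_of_nonneg_left (fejerKernel_one_le ?_) ENNReal.toReal_nonneg
          rwa [abs_div, abs_of_pos hs, div_le_one hs]
        · rw [zero_mul]
          exact mul_nonneg ENNReal.toReal_nonneg (fejerKernel_nonneg _)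
    _ = ∫ ξ in (-1 : ℝ)..1, (1 - |ξ|) * ∑ x, (p x).toReal * cos (ξ * ((X x - m) / s)) := by
        simp only [fejerKernel, ← intervalIntegral.integral_const_mul, Finset.mul_sum]
        rw [← intervalIntegral.integral_finsetSum fun x _ =>
          ((continuous_fejerIntegrand _).intervalIntegrable _ _).const_mul _]
        congr with ξ
        exact Finset.sum_congr rfl fun x _ => by ring
    _ ≤ ∫ ξ in (-1 : ℝ)..1, exp (-b * ξ ^ 2) := by
        refine intervalIntegral.integral_mono_on (by norm_num)
          (Continuous.intervalIntegrable (by fun_prop) _ _)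
          (Continuous.intervalIntegrable (by fun_prop) _ _) fun ξ hξ => ?_
        have hξ1 : |ξ| ≤ 1 := abs_le.2 hξ
        have hS := hchar ξ hξ
        nlinarith [abs_nonneg ξ, exp_pos (-b * ξ ^ 2)]
    _ ≤ √(π / b) := integral_exp_neg_mul_sq_le hb

lemma unif_apply_toReal (n : ℕ) (z : Fin n → Bool) : (unif n z).toReal = (2 ^ n)⁻¹ := by
  simp [unif, PMF.uniformOfFintype_apply]

theorem pr_abs_rademacherSum_sub_le_le {n : ℕ} (R : Finset (Fin n)) (v : Fin n → ℝ) (m : ℝ)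
    {s : ℝ} (hs : 0 < s) (hv : ∀ i ∈ R, |v i| ≤ s) (hK : 0 < ∑ i ∈ R, v i ^ 2) :
    pr (unif n) (fun z => |∑ i ∈ R, v i * pm (z i) - m| ≤ s)
      ≤ √(96 * π / 43) / fejerKernel 1 * (s / √(∑ i ∈ R, v i ^ 2)) := by
  set K := ∑ i ∈ R, v i ^ 2
  have hb : 0 < 43 / 96 * K / s ^ 2 := by positivity
  have hsqrt : √(π / (43 / 96 * K / s ^ 2)) = √(96 * π / 43) * (s / √K) := by
    have : π / (43 / 96 * K / s ^ 2) = 96 * π / 43 * (s / √K) ^ 2 := by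
      rw [div_pow, sq_sqrt hK.le]
      field_simp
    rw [this, sqrt_mul (by positivity), sqrt_sq (by positivity)]
  refine (pr_abs_sub_le_le_of_sum_mul_cos_le _ _ m hs hb fun u hu => ?_).trans_eq
    (by rw [hsqrt]; ring)
  have hscaled : ∀ i ∈ R, |u / s * v i| ≤ 1 := fun i hi => by
    rw [abs_mul, abs_div, abs_of_pos hs, div_mul_comm]
    exact mul_le_one₀ ((div_le_one hs).2 (hv i hi)) (abs_nonneg u) (abs_le.2 hu)
  have hcos := sum_cos_rademacherSum_sub_le R (fun i => u / s * v i) (u / s * m) hscaled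
  simp only [Fintype.card_fin] at hcos
  simp only [unif_apply_toReal, ← Finset.mul_sum]
  calc (2 ^ n)⁻¹ * ∑ z : Fin n → Bool, cos (u * ((∑ i ∈ R, v i * pm (z i) - m) / s))
      = (2 ^ n)⁻¹ * ∑ z : Fin n → Bool, cos (∑ i ∈ R, u / s * v i * pm (z i) - u / s * m) := by
        congr! 3 with z
        rw [← mul_div_assoc, mul_sub, sub_div, Finset.mul_sum, Finset.sum_div]
        congr 1
        · exact Finset.sum_congr rfl fun i _ => by ring
        · ring
    _ ≤ (2 ^ n)⁻¹ * (2 ^ n * exp (-(43 / 96) * ∑ i ∈ R, (u / s * v i) ^ 2)) :=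
        mul_le_mul_of_nonneg_left hcos (by positivity)
    _ = exp (-(43 / 96 * K / s ^ 2) * u ^ 2) := by
        rw [inv_mul_cancel_left₀ (by positivity)]
        congr 1
        simp only [mul_pow, ← Finset.mul_sum, K]
        ring

lemma half_sqrt_sum_sq_le_sqrt_sum_sdiff_sq {ι : Type*} [DecidableEq ι] (w : ι → ℝ)
    {I T : Finset ι} (hIT : I ⊆ T) {c : ℝ} (hc : c ^ 2 ≤ 3 / 4)
    (hI : √(∑ i ∈ I, w i ^ 2) ≤ c * √(∑ i ∈ T, w i ^ 2)) :
    √(∑ i ∈ T, w i ^ 2) / 2 ≤ √(∑ i ∈ T \ I, w i ^ 2) := by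
  have hT : 0 ≤ ∑ i ∈ T, w i ^ 2 := sum_nonneg fun i _ => sq_nonneg (w i)
  have hI2 : ∑ i ∈ I, w i ^ 2 ≤ c ^ 2 * ∑ i ∈ T, w i ^ 2 := by
    have := pow_le_pow_left₀ (sqrt_nonneg _) hI 2
    rwa [sq_sqrt (sum_nonneg fun i _ => sq_nonneg (w i)), mul_pow, sq_sqrt hT] at this
  rw [sum_sdiff_eq_sub hIT, le_sqrt (by positivity) (by nlinarith), div_pow, sq_sqrt hT]
  nlinarith

lemma sum_compl_mul_pm_restrict_eq {n : ℕ} (I : Finset (Fin n)) (h : ℕ) (w : Fin n → ℝ)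
    (zfix z : Fin n → Bool) :
    ∑ i ∈ Iᶜ, w i * pm (if (i : ℕ) < h then zfix i else z i)
      = ∑ i ∈ Iᶜ.filter (fun i : Fin n => (i : ℕ) < h), w i * pm (zfix i)
        + ∑ i ∈ univ.filter (fun j : Fin n => h ≤ (j : ℕ)) \ I, w i * pm (z i) := by
  rw [← sum_filter_add_sum_filter_not Iᶜ (fun i : Fin n => (i : ℕ) < h)]
  congr 1
  · exact sum_congr rfl fun i hi => by rw [if_pos (mem_filter.1 hi).2]
  · refine sum_congr (by ext; simp [and_comm]) fun i hi => ?_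
    rw [if_neg (by simp only [mem_sdiff, mem_filter, mem_univ, true_and] at hi; omega)]

/-- Anti-concentration after a restriction, for an LTF with critical index `h`.
There is a universal constant `C` such that the following holds. Let `w ∈ ℝ^n` be
sorted (`|w₁| ≥ ... ≥ |w_n|`, 0-indexed) with `μ`-critical index `h`, so the tail
`T = {i : h ≤ i}` is `μ`-regular (and non-degenerate: `‖w_T‖₂ > 0`). Let `I ⊆ T`
with `‖w_I‖₂ ≤ √(p/μ)·‖w_T‖₂` where `0 < p < μ/2`. Then for every fixed
assignment `zfix` to the first `h` variables and every `t > 0`, the probability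
over a uniform assignment `z` to the tail variables that
`⟨w_{[n]\I}, z_{[n]\I}⟩ ∈ θ ± t·√(p/μ)·‖w_T‖₂` is at most `C·(t·√(p/μ) + μ)`. -/
theorem restricted_ltf_anticoncentration_small_critical_index :
    ∃ C : ℝ, 0 < C ∧
      ∀ (n h : ℕ) (μ p t θ : ℝ) (w : Fin n → ℝ) (I : Finset (Fin n)),
        0 < μ → μ < 1 → 0 < p → p < μ / 2 → 0 < t →
        (∀ i j : Fin n, i ≤ j → |w j| ≤ |w i|) →
        (∀ i : Fin n, h ≤ (i : ℕ) →
          |w i| ≤ μ * Real.sqrt (∑ j ∈ univ.filter (fun j : Fin n => h ≤ (j : ℕ)), w j ^ 2)) →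
        (∀ i ∈ I, h ≤ (i : ℕ)) →
        Real.sqrt (∑ i ∈ I, w i ^ 2)
          ≤ Real.sqrt (p / μ) *
              Real.sqrt (∑ j ∈ univ.filter (fun j : Fin n => h ≤ (j : ℕ)), w j ^ 2) →
        0 < ∑ j ∈ univ.filter (fun j : Fin n => h ≤ (j : ℕ)), w j ^ 2 →
        ∀ zfix : Fin n → Bool,
          pr (unif n) (fun z =>
              (∑ i ∈ Iᶜ, w i * pm (if (i : ℕ) < h then zfix i else z i)) ∈
                Set.Icc
                  (θ - t * Real.sqrt (p / μ) *
                    Real.sqrt (∑ j ∈ univ.filter (fun j : Fin n => h ≤ (j : ℕ)), w j ^ 2))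
                  (θ + t * Real.sqrt (p / μ) *
                    Real.sqrt (∑ j ∈ univ.filter (fun j : Fin n => h ≤ (j : ℕ)), w j ^ 2)))
            ≤ C * (t * Real.sqrt (p / μ) + μ) := by
  have hC := fejerKernel_one_pos
  refine ⟨2 * (√(96 * π / 43) / fejerKernel 1), by positivity, ?_⟩
  intro n h μ p t θ w I hμ _ hp hpμ ht _ hreg hIT hInorm hT zfix
  set T := univ.filter fun j : Fin n => h ≤ (j : ℕ)
  set σ := √(∑ j ∈ T, w j ^ 2)
  set A := t * √(p / μ) + μ
  have hσ : 0 < σ := sqrt_pos.2 hT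
  have hr : 0 ≤ t * √(p / μ) * σ := by positivity
  have hK : σ / 2 ≤ √(∑ i ∈ T \ I, w i ^ 2) := by
    refine half_sqrt_sum_sq_le_sqrt_sum_sdiff_sq w (fun i hi => by simpa [T] using hIT i hi)
      ?_ hInorm
    rw [sq_sqrt (by positivity), div_le_iff₀ hμ]
    linarith
  have hK0 : 0 < √(∑ i ∈ T \ I, w i ^ 2) := (half_pos hσ).trans_le hK
  set c := ∑ i ∈ Iᶜ.filter (fun i : Fin n => (i : ℕ) < h), w i * pm (zfix i)
  calc pr (unif n) _
      ≤ pr (unif n) fun z => |∑ i ∈ T \ I, w i * pm (z i) - (θ - c)| ≤ A * σ := by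
        refine pr_mono _ fun z hz => ?_
        rw [sum_compl_mul_pm_restrict_eq, Set.mem_Icc] at hz
        rw [abs_le]
        constructor <;> nlinarith
    _ ≤ √(96 * π / 43) / fejerKernel 1 * (A * σ / √(∑ i ∈ T \ I, w i ^ 2)) :=
        pr_abs_rademacherSum_sub_le_le _ w _ (by positivity)
          (fun i hi => (hreg i (by simpa [T] using (mem_sdiff.1 hi).1)).trans (by nlinarith))
          (sqrt_pos.1 hK0)
    _ ≤ √(96 * π / 43) / fejerKernel 1 * (2 * A) := by
        gcongr
        rw [div_le_iff₀ hK0]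
        nlinarith [mul_le_mul_of_nonneg_left hK (by positivity : (0 : ℝ) ≤ A)]
    _ = _ := by ring

end
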